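/- arXiv:1411.2311 — 4 statements merged into one kernel-verified Lean document; each statement's English description precedes it below -/
import Mathlib

section
/- Let R = R(A,B,Z) be a bicolored rectangular family satisfying the standing assumptions with n = |A ∪ B|, and let K ⊆ R↓ be a corner-free intersection subfamily. Suppose λ₁, …, λ_r (r ≥ 1) are vertical lines such that every rectangle of K intersects at least one of them. Then |K| ≤ n·(1 + ⌊log₂ r⌋). -/
open scoped Classical

noncomputable section

abbrev Pt : Type := ℝ × ℝ
abbrev Rect : Type := Set Pt

def IsRect (R : Rect) : Prop := ∃ a b : Pt, a ≤ b ∧ R = Set.Icc a b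

def Intersects (R S : Rect) : Prop := (R ∩ S).Nonempty

def IndepFamily (I : Set Rect) : Prop :=
  ∀ R ∈ I, ∀ S ∈ I, R ≠ S → R ∩ S = ∅

def IsHittingSet (H : Set Pt) (C : Set Rect) : Prop :=
  ∀ R ∈ C, ∃ p ∈ H, p ∈ R

def mis (C : Set Rect) : ℕ :=
  sSup {n | ∃ I : Finset Rect, ↑I ⊆ C ∧ IndepFamily ↑I ∧ I.card = n}

def mhs (C : Set Rect) : ℕ :=
  sInf {n | ∃ H : Finset Pt, IsHittingSet ↑H C ∧ H.card = n}

def brf (A B : Finset Pt) (Z : Set Pt) : Set Rect :=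
  {R | ∃ a ∈ A, ∃ b ∈ B, a ≤ b ∧ Set.Icc a b ⊆ Z ∧ R = Set.Icc a b}

def Standing (A B : Finset Pt) (Z : Set Pt) : Prop :=
  (A ∩ B = ∅) ∧ (↑(A ∪ B) ⊆ Z) ∧
  (∀ p ∈ A ∪ B, ∃ i j : ℤ, 1 ≤ i ∧ i ≤ ((A ∪ B).card : ℤ) ∧ 1 ≤ j ∧ j ≤ ((A ∪ B).card : ℤ) ∧
    p = ((i : ℝ), (j : ℝ))) ∧
  (∀ p ∈ A ∪ B, ∀ q ∈ A ∪ B, p ≠ q → p.1 ≠ q.1 ∧ p.2 ≠ q.2)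

def minRects (C : Set Rect) : Set Rect :=
  {R | R ∈ C ∧ ∀ S ∈ C, S ⊆ R → S = R}

def IsRectCorner (p : Pt) (R : Rect) : Prop :=
  ∃ a b : Pt, a ≤ b ∧ R = Set.Icc a b ∧
    (p = a ∨ p = b ∨ p = (a.1, b.2) ∨ p = (b.1, a.2))

def CornerFree (R S : Rect) : Prop :=
  (∀ p, IsRectCorner p R → p ∉ interior S) ∧ (∀ p, IsRectCorner p S → p ∉ interior R)

def CFI (K : Set Rect) : Prop :=
  ∀ R ∈ K, ∀ S ∈ K, R ≠ S → CornerFree R S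

def interGraph (K : Set Rect) : SimpleGraph K :=
  SimpleGraph.fromRel (fun R S => Intersects (R : Rect) (S : Rect))

def IsComparabilityGraph {V : Type*} (G : SimpleGraph V) : Prop :=
  ∃ le : V → V → Prop, (∀ v, le v v) ∧
    (∀ u v w, le u v → le v w → le u w) ∧
    (∀ u v, le u v → le v u → u = v) ∧
    (∀ u v, G.Adj u v ↔ u ≠ v ∧ (le u v ∨ le v u))

def QSTAB (n : ℕ) (C : Finset Rect) : Set (Rect → ℝ) :=
  {x | (∀ R, 0 ≤ x R) ∧ (∀ R ∉ C, x R = 0) ∧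
    ∀ i j : ℤ, 1 ≤ i → i ≤ (n : ℤ) → 1 ≤ j → j ≤ (n : ℤ) →
      ∑ R ∈ C.filter (fun R => ((i : ℝ), (j : ℝ)) ∈ R), x R ≤ 1}

def misLP (n : ℕ) (C : Finset Rect) : ℝ :=
  sSup {s | ∃ x ∈ QSTAB n C, s = ∑ R ∈ C, x R}

def cliqueNum' {V : Type*} (G : SimpleGraph V) : ℕ :=
  sSup {n | ∃ s : Finset V, G.IsNClique n s}

def IsPerfect {V : Type*} (G : SimpleGraph V) : Prop :=
  ∀ S : Set V, (G.induce S).chromaticNumber = (cliqueNum' (G.induce S) : ℕ∞)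

def rectArea (R : Rect) : ℝ :=
  (sSup (Prod.fst '' R) - sInf (Prod.fst '' R)) *
  (sSup (Prod.snd '' R) - sInf (Prod.snd '' R))

def blCorner (R : Rect) : Pt := (sInf (Prod.fst '' R), sInf (Prod.snd '' R))
def trCorner (R : Rect) : Pt := (sSup (Prod.fst '' R), sSup (Prod.snd '' R))

lemma mem_interior_Icc {p q r : Pt} :
    p ∈ interior (Set.Icc q r) ↔ (q.1 < p.1 ∧ p.1 < r.1) ∧ (q.2 < p.2 ∧ p.2 < r.2) := by
  rw [Set.Icc_prod_eq, interior_prod_eq, interior_Icc, interior_Icc, Set.mem_prod,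
    Set.mem_Ioo, Set.mem_Ioo]

lemma core_aux (a b a' b' : Pt) (hab : a ≤ b) (hab' : a' ≤ b') (c : ℝ)
    (h1 : a.1 ≤ c) (h2 : c ≤ b.1) (h3 : a'.1 ≤ c) (h4 : c ≤ b'.1)
    (hy1 : a.2 < a'.2) (hy2 : b.2 < b'.2) (hover : a'.2 ≤ b.2)
    (hne1 : a.1 ≠ a'.1) (hne2 : a'.2 ≠ b.2) (hne3 : a.1 ≠ b'.1) (hne4 : a'.1 ≠ b.1)
    (hcf : CornerFree (Set.Icc a b) (Set.Icc a' b')) : False := by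
  have hov : a'.2 < b.2 := lt_of_le_of_ne hover hne2
  have hc1 : IsRectCorner ((a.1, b.2) : Pt) (Set.Icc a b) :=
    ⟨a, b, hab, rfl, Or.inr (Or.inr (Or.inl rfl))⟩
  have h5 := hcf.1 _ hc1
  rw [mem_interior_Icc] at h5
  have ha1 : a.1 < a'.1 := by
    by_contra h
    push_neg at h
    have h' : a'.1 < a.1 := lt_of_le_of_ne h (Ne.symm hne1)
    have hx2 : a.1 < b'.1 := lt_of_le_of_ne (h1.trans h4) hne3
    exact h5 ⟨⟨h', hx2⟩, hov, hy2⟩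
  have hc2 : IsRectCorner a' (Set.Icc a' b') := ⟨a', b', hab', rfl, Or.inl rfl⟩
  have h6 := hcf.2 _ hc2
  rw [mem_interior_Icc] at h6
  exact h6 ⟨⟨ha1, lt_of_le_of_ne (h3.trans h2) hne4⟩, hy1, hov⟩

lemma nest_of_cfi (a b a' b' : Pt) (hab : a ≤ b) (hab' : a' ≤ b') (c : ℝ)
    (h1 : a.1 ≤ c) (h2 : c ≤ b.1) (h3 : a'.1 ≤ c) (h4 : c ≤ b'.1)
    (hd_aa' : a = a' ∨ (a.1 ≠ a'.1 ∧ a.2 ≠ a'.2))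
    (hd_bb' : b = b' ∨ (b.1 ≠ b'.1 ∧ b.2 ≠ b'.2))
    (hd_ab' : a.1 ≠ b'.1 ∧ a.2 ≠ b'.2) (hd_a'b : a'.1 ≠ b.1 ∧ a'.2 ≠ b.2)
    (hover : max a.2 a'.2 ≤ min b.2 b'.2)
    (hcf : CornerFree (Set.Icc a b) (Set.Icc a' b')) :
    (a'.2 ≤ a.2 ∧ b.2 ≤ b'.2) ∨ (a.2 ≤ a'.2 ∧ b'.2 ≤ b.2) := by
  have hov1 : a'.2 ≤ b.2 := (le_max_right a.2 a'.2).trans (hover.trans (min_le_left _ _))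
  have hov2 : a.2 ≤ b'.2 := (le_max_left a.2 a'.2).trans (hover.trans (min_le_right _ _))
  rcases hd_aa' with h | ⟨hx, hy⟩
  · rcases le_total b.2 b'.2 with hb | hb
    · exact Or.inl ⟨le_of_eq (congrArg Prod.snd h).symm, hb⟩
    · exact Or.inr ⟨le_of_eq (congrArg Prod.snd h), hb⟩
  rcases hd_bb' with h | ⟨hbx, hby⟩
  · rcases le_total a.2 a'.2 with ha | ha
    · exact Or.inr ⟨ha, le_of_eq (congrArg Prod.snd h).symm⟩
    · exact Or.inl ⟨ha, le_of_eq (congrArg Prod.snd h)⟩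
  rcases lt_or_gt_of_ne hy with h | h
  · rcases le_or_gt b'.2 b.2 with hb | hb
    · exact Or.inr ⟨le_of_lt h, hb⟩
    · exact absurd (core_aux a b a' b' hab hab' c h1 h2 h3 h4 h hb hov1
        hx hd_a'b.2 hd_ab'.1 hd_a'b.1 hcf) (fun h => h)
  · rcases le_or_gt b.2 b'.2 with hb | hb
    · exact Or.inl ⟨le_of_lt h, hb⟩
    · have hcf' : CornerFree (Set.Icc a' b') (Set.Icc a b) := ⟨hcf.2, hcf.1⟩
      exact absurd (core_aux a' b' a b hab' hab c h3 h4 h1 h2 h hb hov2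
        hx.symm hd_ab'.2 hd_a'b.1 hd_ab'.1 hcf') (fun h => h)

lemma line_lemma :
    ∀ (n : ℕ) (E : Finset (Pt × Pt)), E.card ≤ n →
    (∀ e ∈ E, e.1.2 ≤ e.2.2) →
    (∀ e ∈ E, ∀ f ∈ E, e.1.2 = f.1.2 → e.1 = f.1) →
    (∀ e ∈ E, ∀ f ∈ E, e.2.2 = f.2.2 → e.2 = f.2) →
    (∀ e ∈ E, ∀ f ∈ E, e.1 ≠ f.2) →
    (∀ e ∈ E, ∀ f ∈ E, e ≠ f → max e.1.2 f.1.2 ≤ min e.2.2 f.2.2 →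
      (f.1.2 ≤ e.1.2 ∧ e.2.2 ≤ f.2.2) ∨ (e.1.2 ≤ f.1.2 ∧ f.2.2 ≤ e.2.2)) →
    E.card ≤ (E.image Prod.fst ∪ E.image Prod.snd).card := by
  intro n
  induction n with
  | zero => intro E hcard _ _ _ _ _; exact le_trans hcard (Nat.zero_le _)
  | succ n ih =>
    intro E hcard hlen hinj1 hinj2 hABne hnest
    rcases Finset.eq_empty_or_nonempty E with rfl | hne
    · simp
    obtain ⟨e, heE, hmin⟩ := Finset.exists_min_image E (fun f => f.2.2 - f.1.2) hne
    have hpriv : (∀ f ∈ E, f ≠ e → f.1 ≠ e.1) ∨ (∀ f ∈ E, f ≠ e → f.2 ≠ e.2) := by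
      by_contra hcon
      push_neg at hcon
      obtain ⟨⟨P, hPE, hPne, hP1⟩, ⟨Q, hQE, hQne, hQ2⟩⟩ := hcon
      have hP12 : P.1.2 = e.1.2 := congrArg Prod.snd hP1
      have hQ22 : Q.2.2 = e.2.2 := congrArg Prod.snd hQ2
      have hle_e : e.1.2 ≤ e.2.2 := hlen e heE
      have hle_P : P.1.2 ≤ P.2.2 := hlen P hPE
      have hle_Q : Q.1.2 ≤ Q.2.2 := hlen Q hQE
      have hP2ne : P.2.2 ≠ e.2.2 := by
        intro h
        exact hPne (Prod.ext hP1 (hinj2 P hPE e heE h))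
      have heP : e.2.2 < P.2.2 := by
        have hover : max P.1.2 e.1.2 ≤ min P.2.2 e.2.2 := by
          refine max_le (le_min hle_P ?_) (le_min ?_ hle_e)
          · rw [hP12]; exact hle_e
          · rw [← hP12]; exact hle_P
        rcases hnest P hPE e heE hPne hover with ⟨ha, hb⟩ | ⟨ha, hb⟩
        · have := hmin P hPE; exfalso
          have : P.2.2 < e.2.2 := lt_of_le_of_ne hb hP2ne
          have := hmin P hPE
          linarith [hP12]
        · exact lt_of_le_of_ne hb (Ne.symm hP2ne)
      have hQ1ne : Q.1.2 ≠ e.1.2 := by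
        intro h
        exact hQne (Prod.ext (hinj1 Q hQE e heE h) hQ2)
      have heQ : Q.1.2 < e.1.2 := by
        have hover : max Q.1.2 e.1.2 ≤ min Q.2.2 e.2.2 := by
          refine max_le (le_min hle_Q ?_) (le_min ?_ hle_e)
          · rw [← hQ22]; exact hle_Q
          · rw [hQ22]; exact hle_e
        rcases hnest Q hQE e heE hQne hover with ⟨ha, hb⟩ | ⟨ha, hb⟩
        · exfalso
          have hQ1 : e.1.2 < Q.1.2 := lt_of_le_of_ne ha (Ne.symm hQ1ne)
          have := hmin Q hQE
          linarith [hQ22]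
        · exact lt_of_le_of_ne ha hQ1ne
      have hPQ : P ≠ Q := by
        intro h
        rw [h, hQ22] at heP
        exact lt_irrefl _ heP
      have hover2 : max P.1.2 Q.1.2 ≤ min P.2.2 Q.2.2 := by
        refine max_le (le_min hle_P ?_) (le_min ?_ hle_Q)
        · rw [hP12, hQ22]; exact hle_e
        · linarith
      rcases hnest P hPE Q hQE hPQ hover2 with ⟨ha, hb⟩ | ⟨ha, hb⟩ <;> linarith
    have key : ∀ p : Pt, (∀ f ∈ E.erase e, f.1 ≠ p) → (∀ f ∈ E.erase e, f.2 ≠ p) →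
        p ∈ E.image Prod.fst ∪ E.image Prod.snd →
        E.card ≤ (E.image Prod.fst ∪ E.image Prod.snd).card := by
      intro p hp1 hp2 hpV
      set E' := E.erase e with hE'
      have hIH : E'.card ≤ (E'.image Prod.fst ∪ E'.image Prod.snd).card := by
        refine ih E' ?_ ?_ ?_ ?_ ?_ ?_
        · rw [hE']
          have := Finset.card_erase_add_one heE
          omega
        · exact fun f hf => hlen f (Finset.mem_of_mem_erase hf)
        · exact fun f hf g hg h => hinj1 f (Finset.mem_of_mem_erase hf) g (Finset.mem_of_mem_erase hg) h
        · exact fun f hf g hg h => hinj2 f (Finset.mem_of_mem_erase hf) g (Finset.mem_of_mem_erase hg) h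
        · exact fun f hf g hg => hABne f (Finset.mem_of_mem_erase hf) g (Finset.mem_of_mem_erase hg)
        · exact fun f hf g hg h h' => hnest f (Finset.mem_of_mem_erase hf) g (Finset.mem_of_mem_erase hg) h h'
      have hVsub : (E'.image Prod.fst ∪ E'.image Prod.snd) ⊆
          (E.image Prod.fst ∪ E.image Prod.snd).erase p := by
        intro x hx
        rw [Finset.mem_erase]
        rcases Finset.mem_union.mp hx with h | h
        · obtain ⟨f, hf, rfl⟩ := Finset.mem_image.mp h
          exact ⟨hp1 f hf, Finset.mem_union_left _
            (Finset.mem_image_of_mem _ (Finset.mem_of_mem_erase hf))⟩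
        · obtain ⟨f, hf, rfl⟩ := Finset.mem_image.mp h
          exact ⟨hp2 f hf, Finset.mem_union_right _
            (Finset.mem_image_of_mem _ (Finset.mem_of_mem_erase hf))⟩
      have h1 : E.card = E'.card + 1 := (Finset.card_erase_add_one heE).symm
      have h2 : ((E.image Prod.fst ∪ E.image Prod.snd).erase p).card + 1 =
          (E.image Prod.fst ∪ E.image Prod.snd).card := Finset.card_erase_add_one hpV
      have h3 := Finset.card_le_card hVsub
      omega
    rcases hpriv with hp | hp
    · refine key e.1 ?_ ?_ ?_
      · intro f hf
        exact hp f (Finset.mem_of_mem_erase hf) (Finset.ne_of_mem_erase hf)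
      · intro f hf h
        exact hABne e heE f (Finset.mem_of_mem_erase hf) h.symm
      · exact Finset.mem_union_left _ (Finset.mem_image_of_mem _ heE)
    · refine key e.2 ?_ ?_ ?_
      · intro f hf h
        exact hABne f (Finset.mem_of_mem_erase hf) e heE h
      · intro f hf
        exact hp f (Finset.mem_of_mem_erase hf) (Finset.ne_of_mem_erase hf)
      · exact Finset.mem_union_right _ (Finset.mem_image_of_mem _ heE)

lemma split_card (S : Finset ℝ) {c : ℝ} (hc : c ∈ S) :
    (S.filter (fun x => x < c)).card + (S.filter (fun x => c < x)).card + 1 = S.card := by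
  have h1 : S.filter (fun x => x < c) ∪ S.filter (fun x => c < x) = S.erase c := by
    ext x
    simp only [Finset.mem_union, Finset.mem_filter, Finset.mem_erase]
    constructor
    · rintro (⟨h, h'⟩ | ⟨h, h'⟩)
      · exact ⟨ne_of_lt h', h⟩
      · exact ⟨ne_of_gt h', h⟩
    · rintro ⟨hne, hx⟩
      rcases lt_or_gt_of_ne hne with h | h
      · exact Or.inl ⟨hx, h⟩
      · exact Or.inr ⟨hx, h⟩
  have h2 : Disjoint (S.filter (fun x => x < c)) (S.filter (fun x => c < x)) := by
    rw [Finset.disjoint_left]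
    intro x hx hx'
    have := (Finset.mem_filter.mp hx).2
    have := (Finset.mem_filter.mp hx').2
    linarith
  have h3 := Finset.card_union_of_disjoint h2
  rw [h1, Finset.card_erase_of_mem hc] at h3
  have hpos : 0 < S.card := Finset.card_pos.mpr ⟨c, hc⟩
  omega

lemma exists_rank (S : Finset ℝ) : ∀ k, k < S.card → ∃ c ∈ S, (S.filter (fun x => x < c)).card = k := by
  intro k
  induction k with
  | zero =>
    intro hk
    obtain ⟨c, hc, hmin⟩ := S.exists_min_image id (Finset.card_pos.mp (by omega))
    refine ⟨c, hc, ?_⟩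
    rw [Finset.card_eq_zero, Finset.filter_eq_empty_iff]
    intro x hx hlt
    exact absurd (hmin x hx) (not_le.mpr hlt)
  | succ k ih =>
    intro hk
    obtain ⟨c, hc, hcard⟩ := ih (Nat.lt_of_succ_lt hk)
    have hsplit := split_card S hc
    have hT : (S.filter (fun x => c < x)).Nonempty := by
      rw [← Finset.card_pos]; omega
    obtain ⟨c', hc', hmin⟩ := (S.filter (fun x => c < x)).exists_min_image id hT
    have hc'S : c' ∈ S := (Finset.mem_filter.mp hc').1
    have hcc' : c < c' := (Finset.mem_filter.mp hc').2
    refine ⟨c', hc'S, ?_⟩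
    have heq : S.filter (fun x => x < c') = insert c (S.filter (fun x => x < c)) := by
      ext x
      simp only [Finset.mem_insert, Finset.mem_filter]
      constructor
      · rintro ⟨hxS, hxc'⟩
        rcases lt_trichotomy x c with h | h | h
        · exact Or.inr ⟨hxS, h⟩
        · exact Or.inl h
        · exact absurd (hmin x (Finset.mem_filter.mpr ⟨hxS, h⟩)) (not_le.mpr hxc')
      · rintro (rfl | ⟨hxS, hx⟩)
        · exact ⟨hc, hcc'⟩
        · exact ⟨hxS, hx.trans hcc'⟩
    rw [heq, Finset.card_insert_of_notMem (by simp)]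
    omega

lemma exists_median (S : Finset ℝ) (hS : S.Nonempty) :
    ∃ c ∈ S, (S.filter (fun x => x < c)).card ≤ S.card / 2 ∧
      (S.filter (fun x => c < x)).card ≤ S.card / 2 := by
  obtain ⟨c, hc, hcard⟩ := exists_rank S (S.card / 2)
    (Nat.div_lt_self (Finset.card_pos.mpr hS) one_lt_two)
  have := split_card S hc
  exact ⟨c, hc, by omega, by omega⟩

lemma single_line_bound (A B : Finset Pt)
    (hAB : ∀ p : Pt, p ∈ A → p ∈ B → False)
    (hdist : ∀ p ∈ A ∪ B, ∀ q ∈ A ∪ B, p ≠ q → p.1 ≠ q.1 ∧ p.2 ≠ q.2)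
    (c : ℝ) (E : Finset (Pt × Pt))
    (hE : ∀ e ∈ E, e.1 ∈ A ∧ e.2 ∈ B ∧ e.1 ≤ e.2)
    (hcfi : ∀ e ∈ E, ∀ f ∈ E, e ≠ f → CornerFree (Set.Icc e.1 e.2) (Set.Icc f.1 f.2))
    (hc : ∀ e ∈ E, e.1.1 ≤ c ∧ c ≤ e.2.1) :
    E.card ≤ (E.image Prod.fst ∪ E.image Prod.snd).card := by
  have hmemA : ∀ e ∈ E, e.1 ∈ A ∪ B := fun e he => Finset.mem_union_left _ (hE e he).1
  have hmemB : ∀ e ∈ E, e.2 ∈ A ∪ B := fun e he => Finset.mem_union_right _ (hE e he).2.1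
  have hABne : ∀ e ∈ E, ∀ f ∈ E, e.1 ≠ f.2 := by
    intro e he f hf h
    exact hAB e.1 (hE e he).1 (h ▸ (hE f hf).2.1)
  refine line_lemma E.card E le_rfl ?_ ?_ ?_ hABne ?_
  · exact fun e he => ((Prod.le_def.mp (hE e he).2.2)).2
  · intro e he f hf h
    by_contra hne
    exact (hdist e.1 (hmemA e he) f.1 (hmemA f hf) hne).2 h
  · intro e he f hf h
    by_contra hne
    exact (hdist e.2 (hmemB e he) f.2 (hmemB f hf) hne).2 h
  · intro e he f hf hne hover
    obtain ⟨he1, he2, he3⟩ := hE e he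
    obtain ⟨hf1, hf2, hf3⟩ := hE f hf
    refine nest_of_cfi e.1 e.2 f.1 f.2 he3 hf3 c (hc e he).1 (hc e he).2
      (hc f hf).1 (hc f hf).2 ?_ ?_ ?_ ?_ hover (hcfi e he f hf hne)
    · by_cases h : e.1 = f.1
      · exact Or.inl h
      · exact Or.inr (hdist e.1 (hmemA e he) f.1 (hmemA f hf) h)
    · by_cases h : e.2 = f.2
      · exact Or.inl h
      · exact Or.inr (hdist e.2 (hmemB e he) f.2 (hmemB f hf) h)
    · exact hdist e.1 (hmemA e he) f.2 (hmemB f hf) (fun h => hAB e.1 he1 (h ▸ hf2))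
    · exact hdist f.1 (hmemA f hf) e.2 (hmemB e he) (fun h => hAB f.1 hf1 (h ▸ he2))

lemma rec_lemma (A B : Finset Pt)
    (hAB : ∀ p : Pt, p ∈ A → p ∈ B → False)
    (hdist : ∀ p ∈ A ∪ B, ∀ q ∈ A ∪ B, p ≠ q → p.1 ≠ q.1 ∧ p.2 ≠ q.2) :
    ∀ (N : ℕ) (S : Finset ℝ), S.card ≤ N → S.Nonempty →
    ∀ (E : Finset (Pt × Pt)),
      (∀ e ∈ E, e.1 ∈ A ∧ e.2 ∈ B ∧ e.1 ≤ e.2) →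
      (∀ e ∈ E, ∀ f ∈ E, e ≠ f → CornerFree (Set.Icc e.1 e.2) (Set.Icc f.1 f.2)) →
      (∀ e ∈ E, ∃ c ∈ S, e.1.1 ≤ c ∧ c ≤ e.2.1) →
      E.card ≤ (E.image Prod.fst ∪ E.image Prod.snd).card * (1 + Nat.log 2 S.card) := by
  intro N
  induction N with
  | zero =>
    intro S hS hSne
    exact absurd (Finset.card_pos.mpr hSne) (by omega)
  | succ N ih =>
    intro S hScard hSne E hE hcfi hhit
    by_cases hone : S.card ≤ 1
    · have h1 : S.card = 1 := le_antisymm hone (Finset.card_pos.mpr hSne)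
      obtain ⟨c, rfl⟩ := Finset.card_eq_one.mp h1
      have hc : ∀ e ∈ E, e.1.1 ≤ c ∧ c ≤ e.2.1 := by
        intro e he
        obtain ⟨c', hc', h⟩ := hhit e he
        rw [Finset.mem_singleton] at hc'
        rwa [hc'] at h
      have := single_line_bound A B hAB hdist c E hE hcfi hc
      simpa using this
    · push_neg at hone
      obtain ⟨c, hcS, hL, hR⟩ := exists_median S hSne
      set SL := S.filter (fun x => x < c) with hSL
      set SR := S.filter (fun x => c < x) with hSR
      set E0 := E.filter (fun e => e.1.1 ≤ c ∧ c ≤ e.2.1) with hE0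
      set EL := E.filter (fun e => e.2.1 < c) with hEL
      set ER := E.filter (fun e => c < e.1.1) with hER
      have hle : ∀ e ∈ E, e.1.1 ≤ e.2.1 := fun e he => (Prod.le_def.mp (hE e he).2.2).1
      -- partition
      have hdisj1 : Disjoint E0 EL := by
        rw [Finset.disjoint_left]
        intro e he he'
        have h1 := (Finset.mem_filter.mp he).2
        have h2 := (Finset.mem_filter.mp he').2
        linarith [h1.2]
      have hdisj2 : Disjoint (E0 ∪ EL) ER := by
        rw [Finset.disjoint_left]
        intro e he he'
        have h2 := (Finset.mem_filter.mp he').2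
        rcases Finset.mem_union.mp he with h | h
        · have h1 := (Finset.mem_filter.mp h).2
          linarith [h1.1]
        · have h1 := (Finset.mem_filter.mp h).2
          have := hle e (Finset.mem_filter.mp h).1
          linarith
      have hcover : E0 ∪ EL ∪ ER = E := by
        ext e
        simp only [Finset.mem_union, hE0, hEL, hER, Finset.mem_filter]
        constructor
        · rintro ((h | h) | h) <;> exact h.1
        · intro he
          by_cases h1 : e.1.1 ≤ c ∧ c ≤ e.2.1
          · exact Or.inl (Or.inl ⟨he, h1⟩)
          · push_neg at h1
            rcases le_or_gt e.1.1 c with h2 | h2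
            · exact Or.inl (Or.inr ⟨he, h1 h2⟩)
            · exact Or.inr ⟨he, h2⟩
      have hcards : E0.card + EL.card + ER.card = E.card := by
        rw [← hcover, Finset.card_union_of_disjoint hdisj2, Finset.card_union_of_disjoint hdisj1]
      -- the V sets
      set V := E.image Prod.fst ∪ E.image Prod.snd with hV
      have hVsub : ∀ E' : Finset (Pt × Pt), E' ⊆ E →
          E'.image Prod.fst ∪ E'.image Prod.snd ⊆ V := by
        intro E' hsub
        exact Finset.union_subset_union (Finset.image_subset_image hsub)
          (Finset.image_subset_image hsub)
      -- bound for E0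
      have hbound0 : E0.card ≤ V.card := by
        refine le_trans (single_line_bound A B hAB hdist c E0
          (fun e he => hE e (Finset.filter_subset _ _ he))
          (fun e he f hf h => hcfi e (Finset.filter_subset _ _ he) f (Finset.filter_subset _ _ hf) h)
          (fun e he => (Finset.mem_filter.mp he).2)) ?_
        exact Finset.card_le_card (hVsub E0 (Finset.filter_subset _ _))
      -- bounds for EL, ER
      have hhalf : S.card / 2 ≤ N := by omega
      have side_bound : ∀ (E' : Finset (Pt × Pt)) (S' : Finset ℝ), E' ⊆ E → S'.card ≤ S.card / 2 →
          (∀ e ∈ E', ∃ c' ∈ S', e.1.1 ≤ c' ∧ c' ≤ e.2.1) →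
          E'.card ≤ (E'.image Prod.fst ∪ E'.image Prod.snd).card * (1 + Nat.log 2 (S.card / 2)) := by
        intro E' S' hsub hS'card hhit'
        rcases Finset.eq_empty_or_nonempty E' with rfl | hne
        · simp
        have hS'ne : S'.Nonempty := by
          obtain ⟨e, he⟩ := hne
          obtain ⟨c', hc', _⟩ := hhit' e he
          exact ⟨c', hc'⟩
        have := ih S' (le_trans hS'card hhalf) hS'ne E'
          (fun e he => hE e (hsub he))
          (fun e he f hf h => hcfi e (hsub he) f (hsub hf) h) hhit'
        refine le_trans this (Nat.mul_le_mul le_rfl ?_)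
        have := Nat.log_mono_right (b := 2) hS'card
        omega
      have hboundL : EL.card ≤ (EL.image Prod.fst ∪ EL.image Prod.snd).card * (1 + Nat.log 2 (S.card / 2)) := by
        refine side_bound EL SL (Finset.filter_subset _ _) hL ?_
        intro e he
        have heE := (Finset.mem_filter.mp he).1
        have h2 := (Finset.mem_filter.mp he).2
        obtain ⟨c', hc', hle1, hle2⟩ := hhit e heE
        exact ⟨c', Finset.mem_filter.mpr ⟨hc', lt_of_le_of_lt hle2 h2⟩, hle1, hle2⟩
      have hboundR : ER.card ≤ (ER.image Prod.fst ∪ ER.image Prod.snd).card * (1 + Nat.log 2 (S.card / 2)) := by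
        refine side_bound ER SR (Finset.filter_subset _ _) hR ?_
        intro e he
        have heE := (Finset.mem_filter.mp he).1
        have h2 := (Finset.mem_filter.mp he).2
        obtain ⟨c', hc', hle1, hle2⟩ := hhit e heE
        exact ⟨c', Finset.mem_filter.mpr ⟨hc', lt_of_lt_of_le h2 hle1⟩, hle1, hle2⟩
      -- VL, VR disjoint and inside V
      have hVLR : (EL.image Prod.fst ∪ EL.image Prod.snd).card +
          (ER.image Prod.fst ∪ ER.image Prod.snd).card ≤ V.card := by
        have hdisjV : Disjoint (EL.image Prod.fst ∪ EL.image Prod.snd)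
            (ER.image Prod.fst ∪ ER.image Prod.snd) := by
          rw [Finset.disjoint_left]
          intro x hx hx'
          have hxL : x.1 < c := by
            rcases Finset.mem_union.mp hx with h | h <;>
              obtain ⟨e, he, rfl⟩ := Finset.mem_image.mp h
            · have h2 := (Finset.mem_filter.mp he).2
              have := hle e (Finset.mem_filter.mp he).1
              linarith
            · exact (Finset.mem_filter.mp he).2
          have hxR : c < x.1 := by
            rcases Finset.mem_union.mp hx' with h | h <;>
              obtain ⟨e, he, rfl⟩ := Finset.mem_image.mp h
            · exact (Finset.mem_filter.mp he).2
            · have h2 := (Finset.mem_filter.mp he).2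
              have := hle e (Finset.mem_filter.mp he).1
              linarith
          linarith
        rw [← Finset.card_union_of_disjoint hdisjV]
        refine Finset.card_le_card ?_
        exact Finset.union_subset (hVsub EL (Finset.filter_subset _ _))
          (hVsub ER (Finset.filter_subset _ _))
      -- combine
      have hlog : Nat.log 2 (S.card / 2) + 1 = Nat.log 2 S.card := by
        have h1 := Nat.log_div_base 2 S.card
        have h2 := Nat.log_pos one_lt_two hone
        omega
      have hVL := Nat.mul_le_mul hVLR (le_refl (1 + Nat.log 2 (S.card / 2)))
      calc E.card = E0.card + EL.card + ER.card := hcards.symm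
        _ ≤ V.card + ((EL.image Prod.fst ∪ EL.image Prod.snd).card * (1 + Nat.log 2 (S.card / 2)) +
            (ER.image Prod.fst ∪ ER.image Prod.snd).card * (1 + Nat.log 2 (S.card / 2))) := by
          rw [← add_assoc]
          exact Nat.add_le_add (Nat.add_le_add hbound0 hboundL) hboundR
        _ = V.card + ((EL.image Prod.fst ∪ EL.image Prod.snd).card +
            (ER.image Prod.fst ∪ ER.image Prod.snd).card) * (1 + Nat.log 2 (S.card / 2)) := by
          rw [Nat.add_mul]
        _ ≤ V.card + V.card * (1 + Nat.log 2 (S.card / 2)) :=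
          Nat.add_le_add le_rfl (Nat.mul_le_mul hVLR le_rfl)
        _ = V.card * (1 + Nat.log 2 S.card) := by
          rw [← hlog]
          ring

/-- If every rectangle of a corner-free intersection subfamily K ⊆ R↓
meets one of r ≥ 1 vertical lines, then |K| ≤ n·(1 + ⌊log₂ r⌋) where n = |A ∪ B|. -/
theorem cfi_stabbed_by_lines_card_bound (A B : Finset Pt) (Z : Set Pt)
    (hst : Standing A B Z) (K : Set Rect) (hK : K ⊆ minRects (brf A B Z))
    (hcfi : CFI K) (r : ℕ) (hr : 1 ≤ r) (lam : Fin r → ℝ)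
    (hline : ∀ R ∈ K, ∃ i : Fin r, ∃ y : ℝ, ((lam i, y) : Pt) ∈ R) :
    K.ncard ≤ (A ∪ B).card * (1 + Nat.log 2 r) := by
  obtain ⟨hABdisj, hZsub, hint, hdist⟩ := hst
  have hAB : ∀ p : Pt, p ∈ A → p ∈ B → False := by
    intro p hpA hpB
    have h : p ∈ A ∩ B := Finset.mem_inter.mpr ⟨hpA, hpB⟩
    rw [hABdisj] at h
    exact absurd h (Finset.notMem_empty p)
  have hKsub : ∀ R ∈ K, ∃ ab : Pt × Pt, ab.1 ∈ A ∧ ab.2 ∈ B ∧ ab.1 ≤ ab.2 ∧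
      R = Set.Icc ab.1 ab.2 := by
    intro R hR
    obtain ⟨a, ha, b, hb, hle, _, hRe⟩ := (hK hR).1
    exact ⟨(a, b), ha, hb, hle, hRe⟩
  have hfin : K.Finite := by
    refine Set.Finite.subset ((A ×ˢ B).finite_toSet.image
      (fun ab : Pt × Pt => Set.Icc ab.1 ab.2)) ?_
    intro R hR
    obtain ⟨ab, h1, h2, _, h4⟩ := hKsub R hR
    exact ⟨ab, by simp [h1, h2], h4.symm⟩
  set g : Rect → Pt × Pt := fun R =>
    if h : ∃ ab : Pt × Pt, ab.1 ∈ A ∧ ab.2 ∈ B ∧ ab.1 ≤ ab.2 ∧ R = Set.Icc ab.1 ab.2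
    then h.choose else (((0:ℝ), (0:ℝ)), ((0:ℝ), (0:ℝ))) with hg_def
  have hg : ∀ R ∈ K, (g R).1 ∈ A ∧ (g R).2 ∈ B ∧ (g R).1 ≤ (g R).2 ∧
      R = Set.Icc (g R).1 (g R).2 := by
    intro R hR
    have h := hKsub R hR
    simp only [hg_def, dif_pos h]
    exact h.choose_spec
  set F := hfin.toFinset with hF
  have hFK : ∀ R, R ∈ F ↔ R ∈ K := fun R => hfin.mem_toFinset
  set E := F.image g with hE_def
  have hmem : ∀ e ∈ E, ∃ R ∈ K, g R = e ∧ R = Set.Icc e.1 e.2 := by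
    intro e he
    obtain ⟨R, hR, rfl⟩ := Finset.mem_image.mp he
    exact ⟨R, (hFK R).mp hR, rfl, (hg R ((hFK R).mp hR)).2.2.2⟩
  have hginj : Set.InjOn g ↑F := by
    intro R hR S hS hgRS
    rw [(hg R ((hFK R).mp (Finset.mem_coe.mp hR))).2.2.2,
      (hg S ((hFK S).mp (Finset.mem_coe.mp hS))).2.2.2, hgRS]
  have hcardE : E.card = K.ncard := by
    rw [hE_def, Finset.card_image_of_injOn hginj, hF]
    exact (Set.ncard_eq_toFinset_card K hfin).symm
  have hEprop : ∀ e ∈ E, e.1 ∈ A ∧ e.2 ∈ B ∧ e.1 ≤ e.2 := by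
    intro e he
    obtain ⟨R, hRK, rfl, _⟩ := hmem e he
    exact ⟨(hg R hRK).1, (hg R hRK).2.1, (hg R hRK).2.2.1⟩
  have hEcfi : ∀ e ∈ E, ∀ f ∈ E, e ≠ f → CornerFree (Set.Icc e.1 e.2) (Set.Icc f.1 f.2) := by
    intro e he f hf hne
    obtain ⟨R, hRK, rfl, hRe⟩ := hmem e he
    obtain ⟨S, hSK, rfl, hSe⟩ := hmem f hf
    have hRS : R ≠ S := fun h => hne (by rw [h])
    have h := hcfi R hRK S hSK hRS
    rwa [hRe, hSe] at h
  set S : Finset ℝ := Finset.univ.image lam with hS_def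
  have hSne : S.Nonempty := ⟨lam ⟨0, hr⟩, Finset.mem_image_of_mem _ (Finset.mem_univ _)⟩
  have hEhit : ∀ e ∈ E, ∃ c ∈ S, e.1.1 ≤ c ∧ c ≤ e.2.1 := by
    intro e he
    obtain ⟨R, hRK, rfl, hRe⟩ := hmem e he
    obtain ⟨i, y, hy⟩ := hline R hRK
    rw [hRe, Set.mem_Icc] at hy
    exact ⟨lam i, Finset.mem_image_of_mem _ (Finset.mem_univ _),
      (Prod.le_def.mp hy.1).1, (Prod.le_def.mp hy.2).1⟩
  have hmain := rec_lemma A B hAB hdist S.card S le_rfl hSne E hEprop hEcfi hEhit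
  have hV : E.image Prod.fst ∪ E.image Prod.snd ⊆ A ∪ B := by
    intro x hx
    rcases Finset.mem_union.mp hx with h | h <;> obtain ⟨e, he, rfl⟩ := Finset.mem_image.mp h
    · exact Finset.mem_union_left _ (hEprop e he).1
    · exact Finset.mem_union_right _ (hEprop e he).2.1
  have hScard : S.card ≤ r := by
    refine le_trans Finset.card_image_le ?_
    simp
  have hlog : 1 + Nat.log 2 S.card ≤ 1 + Nat.log 2 r := by
    have := Nat.log_mono_right (b := 2) hScard
    omega
  calc K.ncard = E.card := hcardE.symm
    _ ≤ _ := hmain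
    _ ≤ (A ∪ B).card * (1 + Nat.log 2 r) := Nat.mul_le_mul (Finset.card_le_card hV) hlog
end
end

section
/- Let R = R(A,B,Z) be a bicolored rectangular family satisfying the standing assumptions with n = |A ∪ B|. Then every corner-free intersection subfamily K ⊆ R↓ satisfies |K| ≤ n·(1 + ⌊log₂ n⌋); in particular |K| = O(n log n). -/
open scoped Classical

noncomputable section

/-!
Sort the rectangles of `K` into dyadic width classes `2^t ≤ w < 2^(t+1)`; integral coordinates give
`1 ≤ w ≤ n`, so there are at most `1 + ⌊log₂ n⌋` classes. Charge a rectangle to its bottom-left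
corner if it is the narrowest of its class with that corner, and to its top-right corner otherwise.
If two rectangles `R = [a, b]` and a narrower `S = [a', b]` of one class were both charged to `b`,
there would be a narrower `T = [a, b']` in the class as well. Minimality of `R` puts `a'` below `a`
and `b'` above `b`, and as `S` and `T` each have more than half the width of `R`, the top-left
corner of `S` lies in the interior of `T`, so `S ∩ T` is a corner intersection. Hence the charging
is injective into (class, point of `A ∪ B`).
-/

def width (R : Rect) : ℝ := (trCorner R).1 - (blCorner R).1

def widthClass (R : Rect) : ℕ := Nat.log 2 ⌊width R⌋₊

lemma blCorner_Icc {a b : Pt} (h : a ≤ b) : blCorner (Set.Icc a b) = a := by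
  rw [blCorner, Set.Icc_prod_eq, Set.fst_image_prod _ (Set.nonempty_Icc.mpr h.2),
    Set.snd_image_prod (Set.nonempty_Icc.mpr h.1), csInf_Icc h.1, csInf_Icc h.2]

lemma trCorner_Icc {a b : Pt} (h : a ≤ b) : trCorner (Set.Icc a b) = b := by
  rw [trCorner, Set.Icc_prod_eq, Set.fst_image_prod _ (Set.nonempty_Icc.mpr h.2),
    Set.snd_image_prod (Set.nonempty_Icc.mpr h.1), csSup_Icc h.1, csSup_Icc h.2]

lemma lt_add_of_log_floor_eq {x y z : ℝ} (hx : 1 ≤ x) (hy : 1 ≤ y)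
    (hxz : Nat.log 2 ⌊x⌋₊ = Nat.log 2 ⌊z⌋₊) (hyz : Nat.log 2 ⌊y⌋₊ = Nat.log 2 ⌊z⌋₊) :
    z < x + y := by
  have pow_le : ∀ u : ℝ, 1 ≤ u → Nat.log 2 ⌊u⌋₊ = Nat.log 2 ⌊z⌋₊ →
      (2 : ℝ) ^ Nat.log 2 ⌊z⌋₊ ≤ u := by
    intro u hu hlog
    rw [← hlog]
    calc (2 : ℝ) ^ Nat.log 2 ⌊u⌋₊ ≤ (⌊u⌋₊ : ℝ) := by
          exact_mod_cast Nat.pow_log_le_self 2 (Nat.floor_pos.mpr hu).ne'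
      _ ≤ u := Nat.floor_le (by linarith)
  have hz : z < 2 ^ (Nat.log 2 ⌊z⌋₊ + 1) := by
    exact_mod_cast Nat.lt_of_floor_lt (Nat.lt_pow_succ_log_self one_lt_two _)
  rw [pow_succ] at hz
  linarith [pow_le x hx hxz, pow_le y hy hyz]

lemma not_cornerFree_Icc {a b c d : Pt} (hcd : c ≤ d) (hc : c.1 ∈ Set.Ioo a.1 b.1)
    (hd : d.2 ∈ Set.Ioo a.2 b.2) : ¬ CornerFree (Set.Icc a b) (Set.Icc c d) := fun h =>
  h.2 (c.1, d.2) ⟨c, d, hcd, rfl, Or.inr (Or.inr (Or.inl rfl))⟩ (by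
    rw [Set.Icc_prod_eq, interior_prod_eq, interior_Icc, interior_Icc]
    exact ⟨hc, hd⟩)

lemma isAntichain_minRects (C : Set Rect) : IsAntichain (· ⊆ ·) (minRects C) :=
  fun _ hR _ hS hne hsub => hne (hS.2 _ hR.1 hsub)

structure IsSpannedRect (A B : Finset Pt) (m : ℕ) (R : Rect) : Prop where
  eq_Icc : R = Set.Icc (blCorner R) (trCorner R)
  blCorner_mem : blCorner R ∈ A
  trCorner_mem : trCorner R ∈ B
  snd_lt : (blCorner R).2 < (trCorner R).2
  one_le_width : 1 ≤ width R
  width_le : width R ≤ m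

def IsNarrowestInClass (K : Set Rect) (R : Rect) : Prop :=
  ∀ T ∈ K, blCorner T = blCorner R → widthClass T = widthClass R → width R ≤ width T

section Charging

variable {A B : Finset Pt} {m : ℕ} {K : Set Rect}

lemma isNarrowestInClass_of_trCorner_eq (hK : ∀ R ∈ K, IsSpannedRect A B m R)
    (hanti : IsAntichain (· ⊆ ·) K) (hcfi : CFI K) {R S : Rect} (hR : R ∈ K) (hS : S ∈ K)
    (htr : trCorner S = trCorner R) (hcl : widthClass S = widthClass R)
    (hlt : width S < width R) : IsNarrowestInClass K R := by
  intro T hT hbl hclT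
  by_contra! hTlt
  have hSeq : S = Set.Icc (blCorner S) (trCorner R) := htr ▸ (hK S hS).eq_Icc
  have hTeq : T = Set.Icc (blCorner R) (trCorner T) := hbl ▸ (hK T hT).eq_Icc
  have hRsnd := (hK R hR).snd_lt
  have hsum := lt_add_of_log_floor_eq (hK S hS).one_le_width (hK T hT).one_le_width hcl hclT
  simp only [width, htr, hbl] at hlt hTlt hsum
  have hSR : S ≠ R := fun h => by rw [h] at hlt; exact lt_irrefl _ hlt
  have hTR : T ≠ R := fun h => by rw [h] at hTlt; exact lt_irrefl _ hTlt
  have hTS : T ≠ S := fun h => by rw [h] at hbl; rw [hbl] at hlt; exact lt_irrefl _ hlt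
  have hS_below : (blCorner S).2 < (blCorner R).2 := by
    by_contra! h
    refine hanti hS hR hSR ?_
    have hsub : Set.Icc (blCorner S) (trCorner R) ⊆ Set.Icc (blCorner R) (trCorner R) :=
      Set.Icc_subset_Icc ⟨by linarith, h⟩ le_rfl
    rwa [← hSeq, ← (hK R hR).eq_Icc] at hsub
  have hT_above : (trCorner R).2 < (trCorner T).2 := by
    by_contra! h
    refine hanti hT hR hTR ?_
    have hsub : Set.Icc (blCorner R) (trCorner T) ⊆ Set.Icc (blCorner R) (trCorner R) :=
      Set.Icc_subset_Icc le_rfl ⟨by linarith, h⟩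
    rwa [← hTeq, ← (hK R hR).eq_Icc] at hsub
  have hcf := hcfi T hT S hS hTS
  rw [hTeq, hSeq] at hcf
  exact not_cornerFree_Icc ⟨by linarith, by linarith⟩ ⟨by linarith, by linarith⟩
    ⟨hRsnd, hT_above⟩ hcf

def cornerCode (K : Set Rect) (R : Rect) : Pt × ℕ :=
  (if IsNarrowestInClass K R then blCorner R else trCorner R, widthClass R)

lemma injOn_cornerCode (hK : ∀ R ∈ K, IsSpannedRect A B m R) (hAB : Disjoint A B)
    (hfst : Set.InjOn Prod.fst (↑(A ∪ B) : Set Pt)) (hanti : IsAntichain (· ⊆ ·) K)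
    (hcfi : CFI K) : Set.InjOn (cornerCode K) K := by
  intro R hR S hS h
  simp only [cornerCode, Prod.mk.injEq] at h
  obtain ⟨hcorner, hcl⟩ := h
  have eq_of_corners : blCorner R = blCorner S → trCorner R = trCorner S → R = S :=
    fun hbl htr => by rw [(hK R hR).eq_Icc, (hK S hS).eq_Icc, hbl, htr]
  have eq_of_fst : ∀ {p q : Pt}, p ∈ A ∪ B → q ∈ A ∪ B → p.1 = q.1 → p = q :=
    fun hp hq => hfst (Finset.mem_coe.mpr hp) (Finset.mem_coe.mpr hq)
  have hA : ∀ T ∈ K, blCorner T ∈ A ∪ B :=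
    fun T hT => Finset.mem_union_left B (hK T hT).blCorner_mem
  have hB : ∀ T ∈ K, trCorner T ∈ A ∪ B :=
    fun T hT => Finset.mem_union_right A (hK T hT).trCorner_mem
  split_ifs at hcorner with hnR hnS hnS
  · have hw : width R = width S :=
      le_antisymm (hnR S hS hcorner.symm hcl.symm) (hnS R hR hcorner hcl)
    refine eq_of_corners hcorner (eq_of_fst (hB R hR) (hB S hS) ?_)
    simp only [width, hcorner] at hw
    linarith
  · exact absurd (hcorner ▸ (hK S hS).trCorner_mem)
      (Finset.disjoint_left.mp hAB (hK R hR).blCorner_mem)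
  · exact absurd (hcorner ▸ (hK R hR).trCorner_mem)
      (Finset.disjoint_left.mp hAB (hK S hS).blCorner_mem)
  · rcases lt_trichotomy (width S) (width R) with hlt | hw | hgt
    · exact absurd (isNarrowestInClass_of_trCorner_eq hK hanti hcfi hR hS hcorner.symm
        hcl.symm hlt) hnR
    · refine eq_of_corners (eq_of_fst (hA R hR) (hA S hS) ?_) hcorner
      simp only [width, hcorner] at hw
      linarith
    · exact absurd (isNarrowestInClass_of_trCorner_eq hK hanti hcfi hS hR hcorner hcl hgt) hnS

lemma cornerCode_mem (hK : ∀ R ∈ K, IsSpannedRect A B m R) {R : Rect} (hR : R ∈ K) :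
    cornerCode K R ∈ (A ∪ B) ×ˢ Finset.range (1 + Nat.log 2 m) := by
  have hcl : widthClass R ≤ Nat.log 2 m :=
    Nat.log_mono_right (Nat.floor_le_of_le (hK R hR).width_le)
  simp only [cornerCode, Finset.mem_product, Finset.mem_range, Finset.mem_union]
  refine ⟨?_, by omega⟩
  split_ifs
  exacts [Or.inl (hK R hR).blCorner_mem, Or.inr (hK R hR).trCorner_mem]

theorem ncard_le_of_cfi (hK : ∀ R ∈ K, IsSpannedRect A B m R) (hAB : Disjoint A B)
    (hfst : Set.InjOn Prod.fst (↑(A ∪ B) : Set Pt)) (hanti : IsAntichain (· ⊆ ·) K)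
    (hcfi : CFI K) : K.ncard ≤ (A ∪ B).card * (1 + Nat.log 2 m) := by
  calc K.ncard ≤ (↑((A ∪ B) ×ˢ Finset.range (1 + Nat.log 2 m)) : Set (Pt × ℕ)).ncard :=
        Set.ncard_le_ncard_of_injOn _ (fun R hR => Finset.mem_coe.mpr (cornerCode_mem hK hR))
          (injOn_cornerCode hK hAB hfst hanti hcfi)
    _ = (A ∪ B).card * (1 + Nat.log 2 m) := by
        rw [Set.ncard_coe_finset, Finset.card_product, Finset.card_range]

end Charging

namespace Standing

variable {A B : Finset Pt} {Z : Set Pt}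

lemma disjoint (hst : Standing A B Z) : Disjoint A B :=
  Finset.disjoint_iff_inter_eq_empty.mpr hst.1

lemma injOn_fst (hst : Standing A B Z) : Set.InjOn Prod.fst (↑(A ∪ B) : Set Pt) :=
  fun p hp q hq h => by_contra fun hne => (hst.2.2.2 p hp q hq hne).1 h

lemma isSpannedRect (hst : Standing A B Z) {R : Rect} (hR : R ∈ brf A B Z) :
    IsSpannedRect A B (A ∪ B).card R := by
  obtain ⟨a, ha, b, hb, hab, -, rfl⟩ := hR
  have hne : a ≠ b := fun h => Finset.disjoint_left.mp hst.disjoint ha (h ▸ hb)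
  have hsep := hst.2.2.2 a (Finset.mem_union_left B ha) b (Finset.mem_union_right A hb) hne
  obtain ⟨i, k, hi, -, -, -, rfl⟩ := hst.2.2.1 _ (Finset.mem_union_left B ha)
  obtain ⟨j, l, -, hj, -, -, rfl⟩ := hst.2.2.1 _ (Finset.mem_union_right A hb)
  have hij : (i : ℝ) + 1 ≤ j := by
    have hlt : (i : ℝ) < j := lt_of_le_of_ne hab.1 hsep.1
    exact_mod_cast Int.add_one_le_of_lt (by exact_mod_cast hlt)
  have hi : (1 : ℝ) ≤ i := by exact_mod_cast hi
  have hj : (j : ℝ) ≤ (A ∪ B).card := by exact_mod_cast hj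
  constructor <;> simp only [width, blCorner_Icc hab, trCorner_Icc hab]
  exacts [ha, hb, lt_of_le_of_ne hab.2 hsep.2, by linarith, by linarith]

end Standing

/-- Every corner-free intersection subfamily K ⊆ R↓ of a BRF satisfying
the standing assumptions has |K| ≤ n·(1 + ⌊log₂ n⌋), where n = |A ∪ B|. -/
theorem cfi_card_bound (A B : Finset Pt) (Z : Set Pt) (hst : Standing A B Z)
    (K : Set Rect) (hK : K ⊆ minRects (brf A B Z)) (hcfi : CFI K) :
    K.ncard ≤ (A ∪ B).card * (1 + Nat.log 2 (A ∪ B).card) :=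
  ncard_le_of_cfi (fun _ hR => hst.isSpannedRect (hK hR).1) hst.disjoint hst.injOn_fst
    ((isAntichain_minRects _).subset hK) hcfi
end
end

section
/- Let A,B ⊆ ℝ² be finite disjoint sets and let G be the bipartite graph on A ∪ B whose edges are the pairs (a,b) with a ∈ A, b ∈ B and a ≤ b componentwise (the graph representation of the unrestricted BRF R(A,B)). Then two edges (a,b) and (a',b') of G are contained in a common biclique of G if and only if the rectangles Γ(a,b) and Γ(a',b') intersect; equivalently, Γ(a,b) ∩ Γ(a',b') ≠ ∅ if and only if a ≤ b' and a' ≤ b componentwise. -/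
open scoped Classical

noncomputable section

/-- In the graph representation of an unrestricted BRF R(A,B), two edges
(a,b) and (a',b') lie in a common biclique iff the rectangles Γ(a,b) and Γ(a',b')
intersect, which happens iff a ≤ b' and a' ≤ b componentwise. -/
theorem cross_iff_intersect_unrestricted (A B : Finset Pt) (hAB : A ∩ B = ∅)
    (a a' b b' : Pt) (ha : a ∈ A) (ha' : a' ∈ A) (hb : b ∈ B) (hb' : b' ∈ B)
    (hab : a ≤ b) (hab' : a' ≤ b') :
    ((∃ A' B' : Finset Pt, A' ⊆ A ∧ B' ⊆ B ∧ (∀ u ∈ A', ∀ v ∈ B', u ≤ v) ∧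
        a ∈ A' ∧ a' ∈ A' ∧ b ∈ B' ∧ b' ∈ B') ↔
      (Set.Icc a b ∩ Set.Icc a' b').Nonempty) ∧
    ((Set.Icc a b ∩ Set.Icc a' b').Nonempty ↔ (a ≤ b' ∧ a' ≤ b)) := by
  have key : (Set.Icc a b ∩ Set.Icc a' b').Nonempty ↔ (a ≤ b' ∧ a' ≤ b) := by
    constructor
    · rintro ⟨p, ⟨h1, h2⟩, ⟨h3, h4⟩⟩
      exact ⟨le_trans h1 h4, le_trans h3 h2⟩
    · rintro ⟨h1, h2⟩
      refine ⟨a ⊔ a', ⟨⟨le_sup_left, sup_le hab h2⟩, ⟨le_sup_right, sup_le h1 hab'⟩⟩⟩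
  refine ⟨?_, key⟩
  rw [key]
  constructor
  · rintro ⟨A', B', _, _, hcross, haA, ha'A, hbB, hb'B⟩
    exact ⟨hcross a haA b' hb'B, hcross a' ha'A b hbB⟩
  · rintro ⟨h1, h2⟩
    refine ⟨{a, a'}, {b, b'}, ?_, ?_, ?_, by simp, by simp, by simp, by simp⟩
    · intro x hx; simp at hx; rcases hx with rfl | rfl <;> assumption
    · intro x hx; simp at hx; rcases hx with rfl | rfl <;> assumption
    · intro u hu v hv
      simp at hu hv
      rcases hu with rfl | rfl <;> rcases hv with rfl | rfl <;> assumption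
end
end

section
/- Let A,B ⊆ ℝ² be finite disjoint sets such that no two points of A ∪ B share an x-coordinate or a y-coordinate, no two points of A are componentwise comparable, and no two points of B are componentwise comparable (so the unrestricted BRF R = R(A,B) is a bipartite permutation BRF). Define the relation ↘ on R by R ↘ S if and only if R ∩ S = ∅ and (R_x < S_x or R_y > S_y), where R_x < S_x means the projection of R onto the x-axis lies entirely to the left of the projection of S, and R_y > S_y means the projection of R onto the y-axis lies entirely above the projection of S. Then ↘ is a strict partial order on R, and two distinct rectangles R, S ∈ R are disjoint if and only if R ↘ S or S ↘ R; that is, the comparability graph of ↘ is the complement of the intersection graph I(R). -/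
open scoped Classical

noncomputable section

/-- The x-projection of R lies entirely to the left of the x-projection of S. -/
def projXLt (R S : Rect) : Prop := ∀ p ∈ R, ∀ q ∈ S, p.1 < q.1

/-- The y-projection of R lies entirely above the y-projection of S. -/
def projYGt (R S : Rect) : Prop := ∀ p ∈ R, ∀ q ∈ S, q.2 < p.2

/-- The relation ↘ : R ↘ S iff R and S are disjoint and R_x < S_x or R_y > S_y. -/
def searrow (R S : Rect) : Prop := R ∩ S = ∅ ∧ (projXLt R S ∨ projYGt R S)

lemma projXLt_iff {a b a' b' : Pt} (hab : a ≤ b) (hab' : a' ≤ b') :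
    projXLt (Set.Icc a b) (Set.Icc a' b') ↔ b.1 < a'.1 := by
  constructor
  · intro h
    exact h b (Set.mem_Icc.2 ⟨hab, le_refl b⟩) a' (Set.mem_Icc.2 ⟨le_refl a', hab'⟩)
  · intro h p hp q hq
    rw [Set.mem_Icc] at hp hq
    exact lt_of_le_of_lt hp.2.1 (lt_of_lt_of_le h hq.1.1)

lemma projYGt_iff {a b a' b' : Pt} (hab : a ≤ b) (hab' : a' ≤ b') :
    projYGt (Set.Icc a b) (Set.Icc a' b') ↔ b'.2 < a.2 := by
  constructor
  · intro h
    exact h a (Set.mem_Icc.2 ⟨le_refl a, hab⟩) b' (Set.mem_Icc.2 ⟨hab', le_refl b'⟩)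
  · intro h p hp q hq
    rw [Set.mem_Icc] at hp hq
    exact lt_of_le_of_lt hq.2.2 (lt_of_lt_of_le h hp.1.2)

lemma projXLt_disj {R S : Rect} (h : projXLt R S) : R ∩ S = ∅ := by
  rw [Set.eq_empty_iff_forall_notMem]
  rintro p ⟨hp, hq⟩
  exact lt_irrefl _ (h p hp p hq)

lemma projYGt_disj {R S : Rect} (h : projYGt R S) : R ∩ S = ∅ := by
  rw [Set.eq_empty_iff_forall_notMem]
  rintro p ⟨hp, hq⟩
  exact lt_irrefl _ (h p hp p hq)

lemma icc_disj_cases {a b a' b' : Pt} (hab : a ≤ b) (hab' : a' ≤ b')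
    (h : Set.Icc a b ∩ Set.Icc a' b' = ∅) :
    b.1 < a'.1 ∨ b'.1 < a.1 ∨ b'.2 < a.2 ∨ b.2 < a'.2 := by
  by_contra hc
  push_neg at hc
  obtain ⟨h1, h2, h3, h4⟩ := hc
  have hx : ((max a.1 a'.1, max a.2 a'.2) : Pt) ∈ Set.Icc a b ∩ Set.Icc a' b' :=
    ⟨Set.mem_Icc.2 ⟨Prod.le_def.2 ⟨le_max_left _ _, le_max_left _ _⟩,
        Prod.le_def.2 ⟨max_le hab.1 h1, max_le hab.2 h4⟩⟩,
      Set.mem_Icc.2 ⟨Prod.le_def.2 ⟨le_max_right _ _, le_max_right _ _⟩,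
        Prod.le_def.2 ⟨max_le h2 hab'.1, max_le h3 hab'.2⟩⟩⟩
  rw [h] at hx
  exact hx
/-- For a bipartite permutation BRF R = R(A,B) (A, B antichains with
generic coordinates), ↘ is a strict partial order on R and two distinct rectangles are
disjoint iff they are ↘-comparable; i.e. the comparability graph of ↘ is the complement
of the intersection graph I(R). -/
theorem searrow_strict_order_complement (A B : Finset Pt) (hAB : A ∩ B = ∅)
    (hdist : ∀ p ∈ A ∪ B, ∀ q ∈ A ∪ B, p ≠ q → p.1 ≠ q.1 ∧ p.2 ≠ q.2)
    (hA : ∀ p ∈ A, ∀ q ∈ A, p ≠ q → ¬ p ≤ q)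
    (hB : ∀ p ∈ B, ∀ q ∈ B, p ≠ q → ¬ p ≤ q) :
    (∀ R ∈ brf A B Set.univ, ¬ searrow R R) ∧
    (∀ R ∈ brf A B Set.univ, ∀ S ∈ brf A B Set.univ, ∀ T ∈ brf A B Set.univ,
      searrow R S → searrow S T → searrow R T) ∧
    (∀ R ∈ brf A B Set.univ, ∀ S ∈ brf A B Set.univ, R ≠ S →
      (R ∩ S = ∅ ↔ (searrow R S ∨ searrow S R))) := by
  refine ⟨?_, ?_, ?_⟩
  · -- irreflexivity
    rintro R ⟨a, ha, b, hb, hab, -, rfl⟩ ⟨hdisj, -⟩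
    have : a ∈ Set.Icc a b ∩ Set.Icc a b := ⟨⟨le_refl a, hab⟩, ⟨le_refl a, hab⟩⟩
    rw [hdisj] at this
    exact this
  · -- transitivity
    rintro R ⟨a, ha, b, hb, hab, -, rfl⟩ S ⟨a', ha', b', hb', hab', -, rfl⟩
      T ⟨a'', ha'', b'', hb'', hab'', -, rfl⟩ ⟨-, hRS⟩ ⟨-, hST⟩
    rw [projXLt_iff hab hab', projYGt_iff hab hab'] at hRS
    rw [projXLt_iff hab' hab'', projYGt_iff hab' hab''] at hST
    have key : b.1 < a''.1 ∨ b''.2 < a.2 := by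
      by_contra hc
      push_neg at hc
      obtain ⟨h1, h2⟩ := hc
      rcases hRS with hx | hy <;> rcases hST with hx' | hy'
      · exact absurd (lt_trans hx (lt_of_le_of_lt hab'.1 hx')) (not_lt.2 h1)
      · -- R left of S, S above T : a'' < a' componentwise
        have hne : a'' ≠ a' := fun h => absurd (h ▸ (lt_of_le_of_lt h1 hx)) (lt_irrefl _)
        exact hA a'' ha'' a' ha' hne
          (Prod.le_def.2 ⟨le_of_lt (lt_of_le_of_lt h1 hx),
            le_of_lt (lt_of_le_of_lt hab''.2 hy')⟩)
      · -- R above S, S left of T : b' < b'' componentwise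
        have h1' : b'.1 < b''.1 := lt_of_lt_of_le hx' hab''.1
        have hne : b' ≠ b'' := fun h => absurd (h ▸ h1') (lt_irrefl _)
        exact hB b' hb' b'' hb'' hne
          (Prod.le_def.2 ⟨le_of_lt h1', le_of_lt (lt_of_lt_of_le hy h2)⟩)
      · exact absurd (lt_trans hy' (lt_of_le_of_lt hab'.2 hy)) (not_lt.2 h2)
    rcases key with hk | hk
    · exact ⟨projXLt_disj ((projXLt_iff hab hab'').2 hk), Or.inl ((projXLt_iff hab hab'').2 hk)⟩
    · exact ⟨projYGt_disj ((projYGt_iff hab hab'').2 hk), Or.inr ((projYGt_iff hab hab'').2 hk)⟩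
  · -- disjoint iff comparable
    rintro R ⟨a, ha, b, hb, hab, -, rfl⟩ S ⟨a', ha', b', hb', hab', -, rfl⟩ -
    constructor
    · intro hdisj
      rcases icc_disj_cases hab hab' hdisj with h | h | h | h
      · exact Or.inl ⟨hdisj, Or.inl ((projXLt_iff hab hab').2 h)⟩
      · refine Or.inr ⟨?_, Or.inl ((projXLt_iff hab' hab).2 h)⟩
        rw [Set.inter_comm]; exact hdisj
      · exact Or.inl ⟨hdisj, Or.inr ((projYGt_iff hab hab').2 h)⟩
      · refine Or.inr ⟨?_, Or.inr ((projYGt_iff hab' hab).2 h)⟩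
        rw [Set.inter_comm]; exact hdisj
    · rintro (⟨hdisj, -⟩ | ⟨hdisj, -⟩)
      · exact hdisj
      · rw [Set.inter_comm]; exact hdisj
end
end
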